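/- Let F be a commutative ring, n ≥ 1, d ≥ 1, and let m be an element of the free magma on Fin n of degree d' ≤ d and depth l. Let Φ(m) ∈ A'_d(R) be the evaluation of m at (Z_1,…,Z_n) under the ∘ product (via the unique magma homomorphism from the free magma on Fin n to (A'_d(R), ∘) sending x_i ↦ Z_i). Then: (1) for every 1 ≤ k1 ≤ d − d' + 1 and every 1 ≤ k2 ≤ d − l + 1, the (k1, k1 + d', k2) entry of Φ(m) equals the product Π_{t=1}^{d'} z_{σ_m(t), t + k1 − 1, l^m_t + k2 − 1}; and (2) every entry Φ(m)[i1, i2, i3] with i2 ≠ i1 + d', as well as every entry with i2 = i1 + d' but i3 > d − l + 1, is zero. -/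

import Mathlib

noncomputable section

open scoped BigOperators

namespace NAPIT

/-- The list of (leaf label, leaf level) pairs of a nonassociative monomial (element of the
free magma), in left-to-right order, where the root of the monomial is at level `s`. -/
def leafData {n : ℕ} : FreeMagma (Fin n) → ℕ → List (Fin n × ℕ)
  | FreeMagma.of i, s => [(i, s)]
  | FreeMagma.mul x y, s => leafData x (s + 1) ++ leafData y (s + 1)

/-- The degree (number of leaves) of a nonassociative monomial. -/
def degM {n : ℕ} : FreeMagma (Fin n) → ℕ
  | FreeMagma.of _ => 1
  | FreeMagma.mul x y => degM x + degM y

/-- The depth of a nonassociative monomial (root at level 1; the depth is the maximal level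
of a leaf). -/
def depthM {n : ℕ} : FreeMagma (Fin n) → ℕ
  | FreeMagma.of _ => 1
  | FreeMagma.mul x y => max (depthM x) (depthM y) + 1

/-- Evaluation of a nonassociative monomial at `b : Fin n → A`, using `mul` as the product on
`A`; this is the unique magma homomorphism `FreeMagma (Fin n) → (A, mul)` with `x_i ↦ b i`. -/
def evalWith {n : ℕ} {A : Type*} (mul : A → A → A) (b : Fin n → A) : FreeMagma (Fin n) → A
  | FreeMagma.of i => b i
  | FreeMagma.mul x y => mul (evalWith mul b x) (evalWith mul b y)

/-- The multiset of all variants `m_ε` of a monomial `m`, where `ε` ranges over all choices of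
a Boolean for each internal node of `m`, and `m_ε` is obtained from `m` by swapping the two
children at exactly those internal nodes where `ε` is true (counted with multiplicity). -/
def variants {n : ℕ} : FreeMagma (Fin n) → Multiset (FreeMagma (Fin n))
  | FreeMagma.of i => {FreeMagma.of i}
  | FreeMagma.mul x y =>
      (variants x).bind fun x' => (variants y).bind fun y' =>
        {FreeMagma.mul x' y', FreeMagma.mul y' x'}

/-- The underlying module of the algebra `A'_d(R)`: arrays `x[i,j,k]` with
`i, j ∈ Fin (d+1)`, `k ∈ Fin d` (zero-based; the paper's indices are shifted by one). -/
def Arr (d : ℕ) (R : Type*) : Type _ := Fin (d + 1) → Fin (d + 1) → Fin d → R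

namespace Arr

variable {d : ℕ} {R : Type*}

instance instAddCommGroup [AddCommGroup R] : AddCommGroup (Arr d R) :=
  inferInstanceAs (AddCommGroup (Fin (d + 1) → Fin (d + 1) → Fin d → R))

instance instModule {S : Type*} [Semiring S] [AddCommGroup R] [Module S R] :
    Module S (Arr d R) :=
  inferInstanceAs (Module S (Fin (d + 1) → Fin (d + 1) → Fin d → R))

/-- The bilinear product `∘` of `A'_d(R)`:
`(x ∘ y)[i,j,k] = ∑_{l} x[i,l,k+1] * y[l,j,k+1]` if `k+1` is a legal third index, else `0`. -/
def aprod [CommRing R] (x y : Arr d R) : Arr d R := fun i j k =>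
  if h : (k : ℕ) + 1 < d then
    ∑ l : Fin (d + 1), x i l ⟨(k : ℕ) + 1, h⟩ * y l j ⟨(k : ℕ) + 1, h⟩
  else 0

instance instMul [CommRing R] : Mul (Arr d R) := ⟨aprod⟩

end Arr

/-- The algebra `C'_d(R)`: same underlying module as `A'_d(R)`, with the anticommutator
product `a ⊙ b = a ∘ b + b ∘ a`. -/
def CArr (d : ℕ) (R : Type*) : Type _ := Arr d R

namespace CArr

variable {d : ℕ} {R : Type*}

/-- The identity map `A'_d(R) → C'_d(R)` of underlying modules. -/
def ofArr (x : Arr d R) : CArr d R := x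

/-- The identity map `C'_d(R) → A'_d(R)` of underlying modules. -/
def toArr (x : CArr d R) : Arr d R := x

instance instAddCommGroup [AddCommGroup R] : AddCommGroup (CArr d R) :=
  inferInstanceAs (AddCommGroup (Arr d R))

instance instModule {S : Type*} [Semiring S] [AddCommGroup R] [Module S R] :
    Module S (CArr d R) :=
  inferInstanceAs (Module S (Arr d R))

instance instMul [CommRing R] : Mul (CArr d R) :=
  ⟨fun a b => ofArr (toArr a * toArr b + toArr b * toArr a)⟩

end CArr

/-- The element `Z_i ∈ A'_d(R)`, `R = MvPolynomial (Fin n × Fin d × Fin d) F`, whose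
`(j, j+1, k)` entry is the indeterminate `z_{i,j,k}` and whose other entries vanish. -/
def Z (F : Type*) [CommRing F] (n d : ℕ) (i : Fin n) :
    Arr d (MvPolynomial (Fin n × Fin d × Fin d) F) := fun j j' k =>
  if h : (j : ℕ) < d ∧ (j' : ℕ) = (j : ℕ) + 1 then
    MvPolynomial.X (i, ⟨(j : ℕ), h.1⟩, k)
  else 0

/-- The element `Z_i` regarded as an element of `C'_d(R)`. -/
def ZC (F : Type*) [CommRing F] (n d : ℕ) (i : Fin n) :
    CArr d (MvPolynomial (Fin n × Fin d × Fin d) F) := CArr.ofArr (Z F n d i)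

/-- The monomial `∏_{t=1}^{d'} z_{σ_m(t), (t-1) + k1, (l^m_t - 1) + k2}` associated to a
nonassociative monomial `m` of degree `d'` and offsets `k1, k2` (all indices zero-based; the
paper's 1-based offsets are `k1 + 1`, `k2 + 1`).  Indices which would fall out of range are
discarded (this never happens in the intended range of parameters). -/
def monProd (F : Type*) [CommRing F] {n : ℕ} (d : ℕ) (k1 k2 : ℕ) (m : FreeMagma (Fin n)) :
    MvPolynomial (Fin n × Fin d × Fin d) F :=
  (((leafData m 1).zipIdx.map Prod.swap).map fun p =>
    if h : p.1 + k1 < d ∧ p.2.2 - 1 + k2 < d then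
      MvPolynomial.X (p.2.1, ⟨p.1 + k1, h.1⟩, ⟨p.2.2 - 1 + k2, h.2⟩)
    else 0).prod

/-- `ψ(m) = ∑_ε ∏_{t=1}^{d'} z_{σ_{m_ε}(t), t, l^{m_ε}_t}` (1-based), the sum running over all
choices `ε` of a Boolean for each internal node of `m`. -/
def psi (F : Type*) [CommRing F] {n : ℕ} (d : ℕ) (m : FreeMagma (Fin n)) :
    MvPolynomial (Fin n × Fin d × Fin d) F :=
  ((variants m).map fun m' => monProd F d 0 0 m').sum

/-- The coefficient function of an element of the free nonunital nonassociative algebra. -/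
def coeffOf {F : Type*} [Semiring F] {n : ℕ}
    (f : FreeNonUnitalNonAssocAlgebra F (Fin n)) : FreeMagma (Fin n) →₀ F := f.coeff

/-- Evaluation of an element of the free nonunital nonassociative algebra on `x_1, …, x_n` at
the tuple `b`, with `mul` as the product of the target: the linear extension of
`m ↦ evalWith mul b m`, i.e. the unique nonunital `F`-algebra homomorphism sending
`x_i ↦ b i` into `(A, mul)`. -/
def evalNAWith {F : Type*} [Semiring F] {n : ℕ} {A : Type*}
    [AddCommMonoid A] [Module F A] (mul : A → A → A) (b : Fin n → A)
    (f : FreeNonUnitalNonAssocAlgebra F (Fin n)) : A :=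
  Finsupp.sum (coeffOf f) fun m c => c • evalWith mul b m

/-- Evaluation of an element of the free nonunital nonassociative algebra at a tuple `b` of
elements of a (not necessarily unital/associative) algebra `A`: the unique nonunital
`F`-algebra homomorphism sending `x_i ↦ b i`. -/
def evalNA {F : Type*} [Semiring F] {n : ℕ} {A : Type*}
    [AddCommMonoid A] [Mul A] [Module F A] (b : Fin n → A)
    (f : FreeNonUnitalNonAssocAlgebra F (Fin n)) : A :=
  evalNAWith (· * ·) b f

/-- Evaluation of an element of the unitization of the free nonunital nonassociative algebra
at a tuple `b` of elements of the unitization of `A`: the unique unital `F`-algebra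
homomorphism sending `x_i ↦ b i` (and the adjoined unit to the unit). -/
def evalUnit {F : Type*} [CommSemiring F] {n : ℕ} {A : Type*}
    [AddCommMonoid A] [Mul A] [Module F A] (b : Fin n → Unitization F A)
    (f : Unitization F (FreeNonUnitalNonAssocAlgebra F (Fin n))) : Unitization F A :=
  Unitization.inl f.fst + evalNA b f.snd

/-- The commutativity congruence on the free magma: the smallest equivalence relation with
`m₁ * m₂ ≈ m₂ * m₁` and compatible with the product. -/
inductive CommEq {n : ℕ} : FreeMagma (Fin n) → FreeMagma (Fin n) → Prop
  | refl (m : FreeMagma (Fin n)) : CommEq m m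
  | symm {a b : FreeMagma (Fin n)} : CommEq a b → CommEq b a
  | trans {a b c : FreeMagma (Fin n)} : CommEq a b → CommEq b c → CommEq a c
  | comm (a b : FreeMagma (Fin n)) : CommEq (a * b) (b * a)
  | mul_congr {a a' b b' : FreeMagma (Fin n)} :
      CommEq a a' → CommEq b b' → CommEq (a * b) (a' * b')

/-- The basis monomial `m` of the free nonunital nonassociative algebra. -/
def single1 (F : Type*) [Semiring F] {n : ℕ} (m : FreeMagma (Fin n)) :
    FreeNonUnitalNonAssocAlgebra F (Fin n) :=
  MonoidAlgebra.ofCoeff (Finsupp.single m 1 : FreeMagma (Fin n) →₀ F)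

/-- `I_comm`: the `F`-linear span of `{m − m' : m ≈ m'}` inside the free nonunital
nonassociative algebra. -/
def Icomm (F : Type*) [Field F] (n : ℕ) :
    Submodule F (FreeNonUnitalNonAssocAlgebra F (Fin n)) :=
  Submodule.span F
    {x | ∃ m m' : FreeMagma (Fin n), CommEq m m' ∧ x = single1 F m - single1 F m'}

/-
Each `Z_i` is supported on the entries `(j, j + 1, k)`, and the `∘` product consumes one level
of the third index. By induction on `m`, `Φ(m)` is therefore supported on the entries
`(k1, k1 + d', k2)` with `k2 + l ≤ d`: in `Φ(x * y) = Φ(x) ∘ Φ(y)` the sum over the middle index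
collapses to the single term `k1 + deg x`, the product of the entries of `Φ(x)` and `Φ(y)` at
third index `k2 + 1`. This is the recursion satisfied by the leaf monomial, whose leaf levels
grow by one on passing to a subtree.
-/

section

variable {F : Type*} [CommRing F] {n : ℕ}

lemma degM_of (i : Fin n) : degM (FreeMagma.of i) = 1 := rfl

lemma depthM_of (i : Fin n) : depthM (FreeMagma.of i) = 1 := rfl

lemma degM_mul (x y : FreeMagma (Fin n)) : degM (x * y) = degM x + degM y := rfl

lemma depthM_mul (x y : FreeMagma (Fin n)) :
    depthM (x * y) = max (depthM x) (depthM y) + 1 := rfl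

lemma leafData_mul (x y : FreeMagma (Fin n)) (s : ℕ) :
    leafData (x * y) s = leafData x (s + 1) ++ leafData y (s + 1) := rfl

lemma evalWith_mul {A : Type*} [Mul A] (b : Fin n → A) (x y : FreeMagma (Fin n)) :
    evalWith (· * ·) b (x * y) = evalWith (· * ·) b x * evalWith (· * ·) b y := rfl

lemma Arr.mul_apply {d : ℕ} {R : Type*} [CommRing R] (a b : Arr d R)
    (i j : Fin (d + 1)) (k : Fin d) :
    (a * b) i j k = if h : (k : ℕ) + 1 < d then
      ∑ l : Fin (d + 1), a i l ⟨(k : ℕ) + 1, h⟩ * b l j ⟨(k : ℕ) + 1, h⟩ else 0 := rfl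

lemma one_le_depthM (m : FreeMagma (Fin n)) : 1 ≤ depthM m := by
  cases m <;> simp [depthM]

lemma length_leafData (m : FreeMagma (Fin n)) (s : ℕ) : (leafData m s).length = degM m := by
  induction m generalizing s with
  | ih1 i => rfl
  | ih2 x y ihx ihy => simp [leafData_mul, degM_mul, ihx, ihy]

def monProdRec (F : Type*) [CommRing F] {n : ℕ} (d : ℕ) :
    FreeMagma (Fin n) → ℕ → ℕ → MvPolynomial (Fin n × Fin d × Fin d) F
  | FreeMagma.of i, k1, k2 =>
      if h : k1 < d ∧ k2 < d then MvPolynomial.X (i, ⟨k1, h.1⟩, ⟨k2, h.2⟩) else 0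
  | FreeMagma.mul x y, k1, k2 =>
      monProdRec F d x k1 (k2 + 1) * monProdRec F d y (k1 + degM x) (k2 + 1)

lemma monProdRec_mul (d : ℕ) (x y : FreeMagma (Fin n)) (k1 k2 : ℕ) :
    monProdRec F d (x * y) k1 k2 =
      monProdRec F d x k1 (k2 + 1) * monProdRec F d y (k1 + degM x) (k2 + 1) := rfl

lemma prod_leafData_zipIdx (d : ℕ) (m : FreeMagma (Fin n)) (s t k1 k2 : ℕ) (hs : 1 ≤ s) :
    ((((leafData m s).zipIdx t).map Prod.swap).map fun p =>
      if h : p.1 + k1 < d ∧ p.2.2 - 1 + k2 < d then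
        (MvPolynomial.X (p.2.1, ⟨p.1 + k1, h.1⟩, ⟨p.2.2 - 1 + k2, h.2⟩) :
          MvPolynomial (Fin n × Fin d × Fin d) F)
      else 0).prod = monProdRec F d m (t + k1) (k2 + (s - 1)) := by
  induction m generalizing s t with
  | ih1 i =>
    simp only [leafData, List.zipIdx_cons, List.zipIdx_nil, List.map, Prod.swap,
      List.prod_cons, List.prod_nil, mul_one, monProdRec, Nat.add_comm (s - 1) k2]
  | ih2 x y ihx ihy =>
    rw [leafData_mul, List.zipIdx_append, List.map_append, List.map_append, List.prod_append,
      ihx (s + 1) t (by omega), ihy (s + 1) _ (by omega), length_leafData, monProdRec_mul,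
      show k2 + (s + 1 - 1) = k2 + (s - 1) + 1 by omega, Nat.add_right_comm t (degM x) k1]

lemma monProd_eq_monProdRec (d : ℕ) (m : FreeMagma (Fin n)) (k1 k2 : ℕ) :
    monProd F d k1 k2 m = monProdRec F d m k1 k2 := by
  simpa [monProd] using prod_leafData_zipIdx (F := F) d m 1 0 k1 k2 le_rfl

lemma evalWith_Z_apply {d : ℕ} (m : FreeMagma (Fin n)) (i j : Fin (d + 1)) (k : Fin d) :
    evalWith (· * ·) (Z F n d) m i j k =
      if (j : ℕ) = i + degM m ∧ (k : ℕ) + depthM m ≤ d then monProdRec F d m i k else 0 := by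
  induction m generalizing i j k with
  | ih1 a =>
    rw [degM_of, depthM_of]
    simp only [evalWith, Z, monProdRec]
    by_cases h : (j : ℕ) = i + 1
    · have hi : (i : ℕ) < d := by omega
      rw [dif_pos ⟨hi, h⟩, if_pos ⟨h, k.isLt⟩, dif_pos ⟨hi, k.isLt⟩]
    · rw [dif_neg fun h' => h h'.2, if_neg fun h' => h h'.1]
  | ih2 x y ihx ihy =>
    rw [evalWith_mul, Arr.mul_apply, degM_mul, depthM_mul, monProdRec_mul]
    by_cases hk : (k : ℕ) + 1 < d
    swap
    · have := one_le_depthM x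
      exact (dif_neg hk).trans (if_neg fun h => by omega).symm
    rw [dif_pos hk]
    simp only [ihx, ihy]
    by_cases hc :
        (j : ℕ) = i + (degM x + degM y) ∧ (k : ℕ) + (max (depthM x) (depthM y) + 1) ≤ d
    · obtain ⟨hj, hkd⟩ := hc
      have hmid : (i : ℕ) + degM x < d + 1 := by have := j.isLt; omega
      rw [if_pos ⟨hj, hkd⟩, Finset.sum_eq_single ⟨i + degM x, hmid⟩]
      · rw [if_pos ⟨rfl, by omega⟩, if_pos ⟨hj.trans (Nat.add_assoc _ _ _).symm, by omega⟩]
      · intro l _ hl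
        rw [if_neg fun h => hl (Fin.ext h.1), zero_mul]
      · simp
    · rw [if_neg hc]
      refine Finset.sum_eq_zero fun l _ => ?_
      by_cases hx : (l : ℕ) = i + degM x ∧ (k : ℕ) + 1 + depthM x ≤ d
      · exact mul_eq_zero_of_right _ (if_neg fun hy => hc ⟨by omega, by omega⟩)
      · rw [if_neg hx, zero_mul]

end

theorem entries_of_eval_at_Z_general {F : Type*} [CommRing F] (n d : ℕ)
    (m : FreeMagma (Fin n)) (d' l : ℕ)
    (hdeg : degM m = d') (hdepth : depthM m = l) :
    (∀ (i1 i2 : Fin (d + 1)) (i3 : Fin d),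
        (i2 : ℕ) = (i1 : ℕ) + d' → (i3 : ℕ) + l ≤ d →
        evalWith (· * ·) (Z F n d) m i1 i2 i3 = monProd F d (i1 : ℕ) (i3 : ℕ) m) ∧
    (∀ (i1 i2 : Fin (d + 1)) (i3 : Fin d),
        (i2 : ℕ) ≠ (i1 : ℕ) + d' →
        evalWith (· * ·) (Z F n d) m i1 i2 i3 = 0) ∧
    (∀ (i1 i2 : Fin (d + 1)) (i3 : Fin d),
        (i2 : ℕ) = (i1 : ℕ) + d' → d < (i3 : ℕ) + l →
        evalWith (· * ·) (Z F n d) m i1 i2 i3 = 0) := by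
  subst hdeg hdepth
  refine ⟨fun i1 i2 i3 h2 h3 => ?_, fun i1 i2 i3 h2 => ?_, fun i1 i2 i3 _ h3 => ?_⟩ <;>
    rw [evalWith_Z_apply]
  · rw [if_pos ⟨h2, h3⟩, monProd_eq_monProdRec]
  · exact if_neg fun h => h2 h.1
  · exact if_neg fun h => by omega

/-- Claim 3.3 of the paper.  Let `F` be a commutative ring, `n, d ≥ 1`, and
let `m` be an element of the free magma on `Fin n` of degree `d' ≤ d` and depth `l`.  Let
`Φ(m) ∈ A'_d(R)` be the evaluation of `m` at `(Z_1, …, Z_n)` under the `∘` product.  Then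
(all indices zero-based; the paper's 1-based indices `k1, k2, i1, i2, i3` are obtained by
adding one):
(1) for every entry position `(i1, i2, i3)` with `i2 = i1 + d'` and `i3 + l ≤ d`, the entry
    of `Φ(m)` there equals `∏_{t=1}^{d'} z_{σ_m(t), (t-1) + i1, (l^m_t - 1) + i3}`;
(2) every entry with `i2 ≠ i1 + d'` is zero; and
(3) every entry with `i2 = i1 + d'` but `d < i3 + l` is zero. -/
theorem entries_of_eval_at_Z {F : Type*} [CommRing F] (n d : ℕ) (hn : 1 ≤ n) (hd : 1 ≤ d)
    (m : FreeMagma (Fin n)) (d' l : ℕ)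
    (hdeg : degM m = d') (hd' : d' ≤ d) (hdepth : depthM m = l) :
    (∀ (i1 i2 : Fin (d + 1)) (i3 : Fin d),
        (i2 : ℕ) = (i1 : ℕ) + d' → (i3 : ℕ) + l ≤ d →
        evalWith (· * ·) (Z F n d) m i1 i2 i3 = monProd F d (i1 : ℕ) (i3 : ℕ) m) ∧
    (∀ (i1 i2 : Fin (d + 1)) (i3 : Fin d),
        (i2 : ℕ) ≠ (i1 : ℕ) + d' →
        evalWith (· * ·) (Z F n d) m i1 i2 i3 = 0) ∧
    (∀ (i1 i2 : Fin (d + 1)) (i3 : Fin d),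
        (i2 : ℕ) = (i1 : ℕ) + d' → d < (i3 : ℕ) + l →
        evalWith (· * ·) (Z F n d) m i1 i2 i3 = 0) :=
  entries_of_eval_at_Z_general n d m d' l hdeg hdepth

end NAPIT
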